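/- Let L|K be a finite extension of fields of characteristic zero. Then L|K is a Galois extension if and only if 1 ⊗ L ⊆ (L ⊗ 1)·E(L ⊗_K L), where E(L ⊗_K L) is the set of idempotent elements of L ⊗_K L; that is, if and only if for every b ∈ L the element 1 ⊗ b is a finite sum Σ (aᵢ ⊗ 1)eᵢ with aᵢ ∈ L and eᵢ idempotents of L ⊗_K L. -/

import Mathlib

open scoped TensorProduct

/-- `S·T`: the set of finite sums `Σ sᵢ tᵢ` with `sᵢ ∈ S`, `tᵢ ∈ T`. -/
def dotSet {R : Type*} [CommRing R] (S T : Set R) : Set R :=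
  {x | ∃ (n : ℕ) (s t : Fin n → R), (∀ i, s i ∈ S) ∧ (∀ i, t i ∈ T) ∧ x = ∑ i, s i * t i}

/-!
If `L/K` is Galois with group `G`, then `L ⊗_K L ≅ L^G` via `a ⊗ b ↦ (a · σ b)_σ`: surjectivity is
Dedekind's independence of characters and bijectivity follows from `|G| = [L : K]`. Pulling back the
coordinate idempotents `e_σ` gives `1 ⊗ b = Σ_σ (σ b ⊗ 1) e_σ`.

Conversely, for two `K`-embeddings `ι, σ` of `L` into an algebraic closure, the map
`a ⊗ b ↦ ι a · σ b` sends idempotents to `0` or `1`, so it sends `1 ⊗ b = Σ (aᵢ ⊗ 1) eᵢ` to an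
element `σ b` of `ι L`. All conjugates of `ι L` thus lie in `ι L`, which makes `L/K` normal.
-/

section DotSet

variable {R : Type*} [CommRing R] {S T : Set R}

theorem sum_mul_mem_dotSet {ι : Type*} [Fintype ι] {s t : ι → R} (hs : ∀ i, s i ∈ S)
    (ht : ∀ i, t i ∈ T) : ∑ i, s i * t i ∈ dotSet S T :=
  let e := Fintype.equivFin ι
  ⟨_, s ∘ e.symm, t ∘ e.symm, fun _ => hs _, fun _ => ht _,
    (Fintype.sum_equiv e.symm _ _ fun _ => rfl).symm⟩

theorem dotSet_subset {A : Subring R} (hS : S ⊆ A) (hT : T ⊆ A) : dotSet S T ⊆ A := by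
  rintro _ ⟨n, s, t, hs, ht, rfl⟩
  exact A.sum_mem fun i _ => A.mul_mem (hS (hs i)) (hT (ht i))

theorem image_dotSet_subset {R' : Type*} [CommRing R'] (f : R →+* R') :
    f '' dotSet S T ⊆ dotSet (f '' S) (f '' T) := by
  rintro _ ⟨_, ⟨n, s, t, hs, ht, rfl⟩, rfl⟩
  exact ⟨n, f ∘ s, f ∘ t, fun i => ⟨_, hs i, rfl⟩, fun i => ⟨_, ht i, rfl⟩, by simp⟩

end DotSet

section Normality

theorem AlgHom.mem_range_of_one_tmul_mem_dotSet {K A B M : Type*} [CommRing K] [CommRing A]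
    [CommRing B] [CommRing M] [NoZeroDivisors M] [Algebra K A] [Algebra K B] [Algebra K M]
    (ι : A →ₐ[K] M) (σ : B →ₐ[K] M) {b : B}
    (hb : (1 : A) ⊗ₜ[K] b ∈ dotSet (Set.range fun a : A => a ⊗ₜ[K] (1 : B))
      {e : A ⊗[K] B | IsIdempotentElem e}) :
    σ b ∈ ι.range := by
  let ψ := Algebra.TensorProduct.productMap ι σ
  have hS : ψ '' Set.range (fun a : A => a ⊗ₜ[K] (1 : B)) ⊆ ι.range.toSubring := by
    rintro _ ⟨_, ⟨a, rfl⟩, rfl⟩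
    exact ⟨a, by simp [ψ]⟩
  have hT : ψ '' {e : A ⊗[K] B | IsIdempotentElem e} ⊆ ι.range.toSubring := by
    rintro _ ⟨e, he, rfl⟩
    rcases IsIdempotentElem.iff_eq_zero_or_one.mp (he.map ψ) with h | h <;> rw [h]
    exacts [zero_mem _, one_mem _]
  simpa [ψ] using dotSet_subset hS hT (image_dotSet_subset ψ.toRingHom ⟨_, hb, rfl⟩)

theorem Normal.of_forall_fieldRange_le {F K L : Type*} [Field F] [Field K] [Field L]
    [Algebra F K] [Algebra F L] [Normal F L] (ι : K →ₐ[F] L)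
    (h : ∀ σ : K →ₐ[F] L, σ.fieldRange ≤ ι.fieldRange) :
    Normal F K := by
  let e : K ≃ₐ[F] ι.fieldRange := AlgEquiv.ofInjectiveField ι
  have : Normal F ι.fieldRange := IntermediateField.normal_iff_forall_fieldRange_le.mpr
    fun σ _ ⟨y, hy⟩ => h (σ.comp e.toAlgHom) ⟨e.symm y, by simpa using hy⟩
  exact Normal.of_algEquiv e.symm

theorem normal_of_forall_one_tmul_mem_dotSet {K L : Type*} [Field K] [Field L] [Algebra K L]
    [Algebra.IsAlgebraic K L]
    (h : ∀ b : L, (1 : L) ⊗ₜ[K] b ∈ dotSet (Set.range fun a : L => a ⊗ₜ[K] (1 : L))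
      {e : L ⊗[K] L | IsIdempotentElem e}) :
    Normal K L := by
  let ι : L →ₐ[K] AlgebraicClosure K := IsAlgClosed.lift
  refine Normal.of_forall_fieldRange_le ι fun σ _ ⟨b, hb⟩ => ?_
  obtain ⟨a, ha⟩ := ι.mem_range_of_one_tmul_mem_dotSet σ (h b)
  exact ⟨a, ha.trans hb⟩

end Normality

section TensorEval

variable (K L M : Type*) [Field K] [Field L] [Field M] [Algebra K L] [Algebra K M]

noncomputable def tensorEvalAlgHom : M ⊗[K] L →ₐ[M] ((L →ₐ[K] M) → M) :=
  Algebra.TensorProduct.lift (Algebra.ofId M _) (AlgHom.pi fun σ => σ)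
    fun _ _ => Commute.all _ _

variable {K L M}

@[simp]
theorem tensorEvalAlgHom_tmul (m : M) (b : L) :
    tensorEvalAlgHom K L M (m ⊗ₜ b) = fun σ => m * σ b := by
  ext σ
  simp [tensorEvalAlgHom]

variable [FiniteDimensional K L]

theorem tensorEvalAlgHom_surjective : Function.Surjective (tensorEvalAlgHom K L M) := by
  have hli : LinearIndependent M fun (σ : L →ₐ[K] M) (b : L) => σ b :=
    (linearIndependent_monoidHom L M).comp (fun σ : L →ₐ[K] M => (σ : L →* M))
      fun _ _ h => AlgHom.ext (DFunLike.congr_fun h :)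
  rw [← AlgHom.range_eq_top, eq_top_iff, ← Subalgebra.toSubmodule.le_iff_le,
    Algebra.top_toSubmodule, ← span_flip_eq_top_iff_linearIndependent.mpr hli,
    Submodule.span_le]
  rintro _ ⟨b, rfl⟩
  exact ⟨1 ⊗ₜ b, by ext; simp [flip]⟩

theorem tensorEvalAlgHom_bijective (h : Nat.card (L →ₐ[K] M) = Module.finrank K L) :
    Function.Bijective (tensorEvalAlgHom K L M) := by
  classical
  have : Fintype (L →ₐ[K] M) := Fintype.ofFinite _
  have hrank : Module.finrank M (M ⊗[K] L) = Module.finrank M ((L →ₐ[K] M) → M) := by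
    rw [Module.finrank_baseChange, Module.finrank_fintype_fun_eq_card,
      ← Nat.card_eq_fintype_card, h]
  have hsurj := tensorEvalAlgHom_surjective (K := K) (L := L) (M := M)
  exact ⟨(LinearMap.injective_iff_surjective_of_finrank_eq_finrank hrank
    (f := (tensorEvalAlgHom K L M).toLinearMap)).mpr hsurj, hsurj⟩

theorem one_tmul_mem_dotSet_of_natCard_algHom (h : Nat.card (L →ₐ[K] M) = Module.finrank K L)
    (b : L) :
    (1 : M) ⊗ₜ[K] b ∈ dotSet (Set.range fun a : M => a ⊗ₜ[K] (1 : L))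
      {e : M ⊗[K] L | IsIdempotentElem e} := by
  classical
  have : Fintype (L →ₐ[K] M) := Fintype.ofFinite _
  let E := AlgEquiv.ofBijective _ (tensorEvalAlgHom_bijective h)
  have hb : (1 : M) ⊗ₜ[K] b = ∑ σ, (σ b ⊗ₜ[K] 1) * E.symm (Pi.single σ 1) := by
    apply E.injective
    simp only [map_sum, map_mul, AlgEquiv.apply_symm_apply]
    ext τ
    simp [E, Finset.sum_apply, Pi.single_apply]
  rw [hb]
  refine sum_mul_mem_dotSet (fun σ => ⟨σ b, rfl⟩) fun σ => ?_
  have : IsIdempotentElem (Pi.single σ 1 : (L →ₐ[K] M) → M) := by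
    simp [IsIdempotentElem, ← Pi.single_mul]
  exact this.map E.symm

end TensorEval

theorem isGalois_iff_idempotents_general
    (K L : Type*) [Field K] [CharZero K] [Field L] [Algebra K L]
    [FiniteDimensional K L] :
    IsGalois K L ↔
      ∀ b : L, (1 : L) ⊗ₜ[K] b ∈
        dotSet (Set.range fun a : L => a ⊗ₜ[K] (1 : L))
          {e : L ⊗[K] L | IsIdempotentElem e} := by
  refine ⟨fun _ => one_tmul_mem_dotSet_of_natCard_algHom ?_, fun h => ?_⟩
  · exact AlgHom.natCard_of_splits K L L (Normal.splits inferInstance)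
  · have : Normal K L := normal_of_forall_one_tmul_mem_dotSet h
    exact ⟨⟩

/-- A finite extension `L|K` of fields of characteristic zero is Galois
iff `1 ⊗ L ⊆ (L ⊗ 1)·E(L ⊗_K L)`, where `E(L ⊗_K L)` denotes the set of idempotents of
`L ⊗_K L`: for every `b ∈ L` the element `1 ⊗ b` is a finite sum `Σ (aᵢ ⊗ 1)eᵢ` with
`aᵢ ∈ L` and `eᵢ` idempotent. -/
theorem isGalois_iff_idempotents
    (K L : Type*) [Field K] [CharZero K] [Field L] [CharZero L] [Algebra K L]
    [FiniteDimensional K L] :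
    IsGalois K L ↔
      ∀ b : L, (1 : L) ⊗ₜ[K] b ∈
        dotSet (Set.range fun a : L => a ⊗ₜ[K] (1 : L))
          {e : L ⊗[K] L | IsIdempotentElem e} :=
  isGalois_iff_idempotents_general K L
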